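/- arXiv:2201.03949 — 2 statements merged into one kernel-verified Lean document; each statement's English description precedes it below -/
import Mathlib

section
/- Let f, g ∈ ℝ^n and K ∈ ℝ_+^{n×m} with entries δ_min ≤ K_{ij} ≤ 1, δ_min > 0. Suppose (f*, g*) maximizes L(f,g) = αᵀf + βᵀg − ε(e^{f/ε}⊙α)ᵀK(e^{g/ε}⊙β) + ε over all (f,g), where α ∈ Δ^n, β ∈ Δ^m have positive entries and ε > 0. If additionally αᵀf* = βᵀg* (which can be arranged by a shift), then ‖f*‖_∞ ≤ ε·log(1/δ_min) and ‖g*‖_∞ ≤ ε·log(1/δ_min). -/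
open Finset

/-- The entropic OT dual objective
`L(f,g) = αᵀf + βᵀg − ε (e^{f/ε}⊙α)ᵀ K (e^{g/ε}⊙β) + ε`. -/
noncomputable def dualObj {n m : ℕ} (ε : ℝ) (K : Matrix (Fin n) (Fin m) ℝ)
    (α : Fin n → ℝ) (β : Fin m → ℝ) (f : Fin n → ℝ) (g : Fin m → ℝ) : ℝ :=
  (∑ i, α i * f i) + (∑ j, β j * g j)
    - ε * ∑ i, ∑ j, (Real.exp (f i / ε) * α i) * K i j * (Real.exp (g j / ε) * β j)
    + ε

lemma sum_update_aux {N : ℕ} (h : Fin N → ℝ → ℝ) (F : Fin N → ℝ) (i : Fin N) (t : ℝ) :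
    ∑ x, h x (Function.update F i t x) = (∑ x, h x (F x)) + (h i t - h i (F i)) := by
  classical
  rw [Fintype.sum_eq_add_sum_compl i, Fintype.sum_eq_add_sum_compl i (fun x => h x (F x))]
  have e : ∑ x ∈ ({i}ᶜ : Finset (Fin N)), h x (Function.update F i t x)
      = ∑ x ∈ ({i}ᶜ : Finset (Fin N)), h x (F x) :=
    Finset.sum_congr rfl fun x hx => by
      rw [Function.update_of_ne (by simpa using hx)]
  rw [Function.update_self, e]; ring

lemma jensen_exp {N : ℕ} (w x : Fin N → ℝ) (hw : ∀ i, 0 ≤ w i) (h1 : ∑ i, w i = 1) :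
    Real.exp (∑ i, w i * x i) ≤ ∑ i, w i * Real.exp (x i) := by
  have := convexOn_exp.map_sum_le (fun i _ => hw i) h1 (fun i _ => Set.mem_univ (x i))
  simpa using this

lemma foc_lemma {N : ℕ} (ε : ℝ) (hε : 0 < ε) (w : Fin N → ℝ) (hw : ∀ i, 0 < w i)
    (A : Fin N → ℝ) (hA : ∀ i, 0 < A i) (F : Fin N → ℝ)
    (hopt : ∀ G : Fin N → ℝ,
      (∑ x, w x * G x) - ε * ∑ x, Real.exp (G x / ε) * w x * A x
        ≤ (∑ x, w x * F x) - ε * ∑ x, Real.exp (F x / ε) * w x * A x) :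
    ∀ i, F i = -(ε * Real.log (A i)) := by
  intro i
  set t₀ := -(ε * Real.log (A i)) with ht₀
  have h1 := hopt (Function.update F i t₀)
  have key1 : (∑ x, w x * Function.update F i t₀ x)
      = (∑ x, w x * F x) + (w i * t₀ - w i * F i) :=
    sum_update_aux (fun x v => w x * v) F i t₀
  have key2 : (∑ x, Real.exp (Function.update F i t₀ x / ε) * w x * A x)
      = (∑ x, Real.exp (F x / ε) * w x * A x)
        + (Real.exp (t₀ / ε) * w i * A i - Real.exp (F i / ε) * w i * A i) :=
    sum_update_aux (fun x v => Real.exp (v / ε) * w x * A x) F i t₀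
  rw [key1, key2] at h1
  have hAi := hA i
  have hwi := hw i
  have hexp : Real.exp (t₀ / ε) = (A i)⁻¹ := by
    rw [ht₀, neg_div, mul_div_cancel_left₀ _ hε.ne', Real.exp_neg, Real.exp_log hAi]
  set s := F i / ε + Real.log (A i) with hs
  have hexp2 : Real.exp (F i / ε) * A i = Real.exp s := by
    rw [hs, Real.exp_add, Real.exp_log hAi]
  have hF : F i = ε * s - ε * Real.log (A i) := by
    rw [hs]; field_simp; ring
  have h2 : w i * t₀ - w i * F i
      - ε * (Real.exp (t₀ / ε) * w i * A i - Real.exp (F i / ε) * w i * A i) ≤ 0 := by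
    linarith
  rw [hexp] at h2
  have e1 : (A i)⁻¹ * w i * A i = w i := by field_simp
  have e2 : Real.exp (F i / ε) * w i * A i = Real.exp s * w i := by
    rw [mul_right_comm, hexp2]
  rw [e1, e2, ht₀, hF] at h2
  have h3 : ε * w i * (Real.exp s - s - 1) ≤ 0 := by nlinarith [h2]
  have hpos : 0 < ε * w i := mul_pos hε hwi
  have hX : Real.exp s - s - 1 ≤ 0 := by
    by_contra h
    push_neg at h
    exact absurd h3 (not_le.2 (mul_pos hpos h))
  have hs0 : s = 0 := by
    by_contra h
    have := Real.add_one_lt_exp h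
    linarith
  rw [hF, hs0]; ring

theorem stmt7 {n m : ℕ} (ε δmin : ℝ) (hε : 0 < ε) (hδ : 0 < δmin)
    (α : Fin n → ℝ) (β : Fin m → ℝ)
    (hα : ∀ i, 0 < α i) (hα1 : ∑ i, α i = 1)
    (hβ : ∀ j, 0 < β j) (hβ1 : ∑ j, β j = 1)
    (K : Matrix (Fin n) (Fin m) ℝ)
    (hK : ∀ i j, δmin ≤ K i j ∧ K i j ≤ 1)
    (f' : Fin n → ℝ) (g' : Fin m → ℝ)
    (hopt : ∀ (f : Fin n → ℝ) (g : Fin m → ℝ),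
      dualObj ε K α β f g ≤ dualObj ε K α β f' g')
    (hbal : ∑ i, α i * f' i = ∑ j, β j * g' j) :
    (∀ i, |f' i| ≤ ε * Real.log (1 / δmin)) ∧
      (∀ j, |g' j| ≤ ε * Real.log (1 / δmin)) := by
  have hn : n ≠ 0 := by rintro rfl; simp at hα1
  have hm : m ≠ 0 := by rintro rfl; simp at hβ1
  have : NeZero n := ⟨hn⟩
  have : NeZero m := ⟨hm⟩
  have hne_n : (Finset.univ : Finset (Fin n)).Nonempty := univ_nonempty
  have hne_m : (Finset.univ : Finset (Fin m)).Nonempty := univ_nonempty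
  set A : Fin n → ℝ := fun i => ∑ j, K i j * (Real.exp (g' j / ε) * β j) with hA
  set B : Fin m → ℝ := fun j => ∑ i, (Real.exp (f' i / ε) * α i) * K i j with hB
  have hKpos : ∀ i j, 0 < K i j := fun i j => lt_of_lt_of_le hδ (hK i j).1
  have hApos : ∀ i, 0 < A i := fun i =>
    Finset.sum_pos (fun j _ => mul_pos (hKpos i j) (mul_pos (Real.exp_pos _) (hβ j))) hne_m
  have hBpos : ∀ j, 0 < B j := fun j =>
    Finset.sum_pos (fun i _ => mul_pos (mul_pos (Real.exp_pos _) (hα i)) (hKpos i j)) hne_n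
  -- double sum rewrites
  have hdouble : ∀ F : Fin n → ℝ,
      (∑ i, ∑ j, (Real.exp (F i / ε) * α i) * K i j * (Real.exp (g' j / ε) * β j))
        = ∑ i, Real.exp (F i / ε) * α i * A i := by
    intro F
    refine Finset.sum_congr rfl fun i _ => ?_
    rw [hA, Finset.mul_sum]
    exact Finset.sum_congr rfl fun j _ => by ring
  have hdouble2 : ∀ G : Fin m → ℝ,
      (∑ i, ∑ j, (Real.exp (f' i / ε) * α i) * K i j * (Real.exp (G j / ε) * β j))
        = ∑ j, Real.exp (G j / ε) * β j * B j := by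
    intro G
    rw [Finset.sum_comm]
    refine Finset.sum_congr rfl fun j _ => ?_
    rw [hB, Finset.mul_sum]
    exact Finset.sum_congr rfl fun i _ => by ring
  -- first order conditions
  have focf : ∀ i, f' i = -(ε * Real.log (A i)) := by
    refine foc_lemma ε hε α hα A hApos f' fun G => ?_
    have h := hopt G g'
    unfold dualObj at h
    rw [hdouble G, hdouble f'] at h
    linarith
  have focg : ∀ j, g' j = -(ε * Real.log (B j)) := by
    refine foc_lemma ε hε β hβ B hBpos g' fun G => ?_
    have h := hopt f' G
    unfold dualObj at h
    rw [hdouble2 G, hdouble2 g'] at h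
    linarith
  -- bounds on A and B
  set Sg : ℝ := ∑ j, Real.exp (g' j / ε) * β j with hSgdef
  set Sf : ℝ := ∑ i, Real.exp (f' i / ε) * α i with hSfdef
  have hSgpos : 0 < Sg :=
    Finset.sum_pos (fun j _ => mul_pos (Real.exp_pos _) (hβ j)) hne_m
  have hSfpos : 0 < Sf :=
    Finset.sum_pos (fun i _ => mul_pos (Real.exp_pos _) (hα i)) hne_n
  have hAub : ∀ i, A i ≤ Sg := fun i =>
    Finset.sum_le_sum fun j _ => by
      have := mul_pos (Real.exp_pos (g' j / ε)) (hβ j)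
      nlinarith [(hK i j).2]
  have hAlb : ∀ i, δmin * Sg ≤ A i := fun i => by
    rw [hSgdef, Finset.mul_sum]
    exact Finset.sum_le_sum fun j _ => by
      have := mul_pos (Real.exp_pos (g' j / ε)) (hβ j)
      nlinarith [(hK i j).1]
  have hBub : ∀ j, B j ≤ Sf := fun j =>
    Finset.sum_le_sum fun i _ => by
      have := mul_pos (Real.exp_pos (f' i / ε)) (hα i)
      nlinarith [(hK i j).2]
  have hBlb : ∀ j, δmin * Sf ≤ B j := fun j => by
    rw [hSfdef, Finset.mul_sum]
    exact Finset.sum_le_sum fun i _ => by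
      have := mul_pos (Real.exp_pos (f' i / ε)) (hα i)
      nlinarith [(hK i j).1]
  set L : ℝ := Real.log (1 / δmin) with hLdef
  have hLeq : L = -Real.log δmin := by rw [hLdef, one_div, Real.log_inv]
  -- δmin ≤ 1
  obtain ⟨i0, _⟩ := hne_n
  obtain ⟨j0, _⟩ := hne_m
  have hδ1 : δmin ≤ 1 := le_trans (hK i0 j0).1 (hK i0 j0).2
  have hL0 : 0 ≤ L := by
    rw [hLeq]
    have := Real.log_nonpos hδ.le hδ1
    linarith
  set u : ℝ := ε * Real.log Sg with hu
  set v : ℝ := ε * Real.log Sf with hv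
  -- coordinatewise bounds
  have hfb : ∀ i, -u ≤ f' i ∧ f' i ≤ -u + ε * L := by
    intro i
    have hlogub : Real.log (A i) ≤ Real.log Sg := Real.log_le_log (hApos i) (hAub i)
    have hloglb : Real.log δmin + Real.log Sg ≤ Real.log (A i) := by
      rw [← Real.log_mul hδ.ne' hSgpos.ne']
      exact Real.log_le_log (mul_pos hδ hSgpos) (hAlb i)
    rw [focf i, hu, hLeq]
    constructor
    · nlinarith
    · nlinarith
  have hgb : ∀ j, -v ≤ g' j ∧ g' j ≤ -v + ε * L := by
    intro j
    have hlogub : Real.log (B j) ≤ Real.log Sf := Real.log_le_log (hBpos j) (hBub j)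
    have hloglb : Real.log δmin + Real.log Sf ≤ Real.log (B j) := by
      rw [← Real.log_mul hδ.ne' hSfpos.ne']
      exact Real.log_le_log (mul_pos hδ hSfpos) (hBlb j)
    rw [focg j, hv, hLeq]
    constructor
    · nlinarith
    · nlinarith
  set c : ℝ := ∑ i, α i * f' i with hc
  -- c ≥ -u
  have hclb : -u ≤ c := by
    have : ∑ i, α i * (-u) ≤ ∑ i, α i * f' i :=
      Finset.sum_le_sum fun i _ => mul_le_mul_of_nonneg_left (hfb i).1 (hα i).le
    rw [← Finset.sum_mul, hα1, one_mul] at this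
    exact this
  have hclb' : -v ≤ c := by
    rw [hbal]
    have : ∑ j, β j * (-v) ≤ ∑ j, β j * g' j :=
      Finset.sum_le_sum fun j _ => mul_le_mul_of_nonneg_left (hgb j).1 (hβ j).le
    rw [← Finset.sum_mul, hβ1, one_mul] at this
    exact this
  -- Jensen: c ≤ u and c ≤ v
  have hcu : c ≤ u := by
    have hj := jensen_exp β (fun j => g' j / ε) (fun j => (hβ j).le) hβ1
    have hS : (∑ j, β j * Real.exp (g' j / ε)) = Sg := by
      rw [hSgdef]; exact Finset.sum_congr rfl fun j _ => mul_comm _ _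
    rw [hS] at hj
    have hlog : (∑ j, β j * (g' j / ε)) ≤ Real.log Sg := by
      rw [← Real.log_exp (∑ j, β j * (g' j / ε))]
      exact Real.log_le_log (Real.exp_pos _) hj
    have hsum : (∑ j, β j * (g' j / ε)) = c / ε := by
      rw [hbal, Finset.sum_div]
      exact Finset.sum_congr rfl fun j _ => by field_simp
    rw [hsum] at hlog
    rw [hu]
    calc c = ε * (c / ε) := by field_simp
    _ ≤ ε * Real.log Sg := mul_le_mul_of_nonneg_left hlog hε.le
  have hcv : c ≤ v := by
    have hj := jensen_exp α (fun i => f' i / ε) (fun i => (hα i).le) hα1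
    have hS : (∑ i, α i * Real.exp (f' i / ε)) = Sf := by
      rw [hSfdef]; exact Finset.sum_congr rfl fun i _ => mul_comm _ _
    rw [hS] at hj
    have hlog : (∑ i, α i * (f' i / ε)) ≤ Real.log Sf := by
      rw [← Real.log_exp (∑ i, α i * (f' i / ε))]
      exact Real.log_le_log (Real.exp_pos _) hj
    have hsum : (∑ i, α i * (f' i / ε)) = c / ε := by
      rw [hc, Finset.sum_div]
      exact Finset.sum_congr rfl fun i _ => by field_simp
    rw [hsum] at hlog
    rw [hv]
    calc c = ε * (c / ε) := by field_simp
    _ ≤ ε * Real.log Sf := mul_le_mul_of_nonneg_left hlog hε.le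
  have hu0 : 0 ≤ u := by linarith
  have hv0 : 0 ≤ v := by linarith
  -- upper bounds on u, v
  have huub : u ≤ -v + ε * L := by
    have hSub : Sg ≤ Real.exp ((-v + ε * L) / ε) := by
      have hone : ∑ j, Real.exp ((-v + ε * L) / ε) * β j = Real.exp ((-v + ε * L) / ε) := by
        rw [← Finset.mul_sum, hβ1, mul_one]
      rw [hSgdef, ← hone]
      refine Finset.sum_le_sum fun j _ => ?_
      have hdiv : g' j / ε ≤ (-v + ε * L) / ε := by
        gcongr
        exact (hgb j).2
      exact mul_le_mul_of_nonneg_right (Real.exp_le_exp.2 hdiv) (hβ j).le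
    have hlog : Real.log Sg ≤ (-v + ε * L) / ε := by
      have := Real.log_le_log hSgpos hSub
      rwa [Real.log_exp] at this
    have := mul_le_mul_of_nonneg_left hlog hε.le
    rw [hu]
    have heq : ε * ((-v + ε * L) / ε) = -v + ε * L := by field_simp
    linarith [heq ▸ this]
  have hvub : v ≤ -u + ε * L := by
    have hSub : Sf ≤ Real.exp ((-u + ε * L) / ε) := by
      have hone : ∑ i, Real.exp ((-u + ε * L) / ε) * α i = Real.exp ((-u + ε * L) / ε) := by
        rw [← Finset.mul_sum, hα1, mul_one]
      rw [hSfdef, ← hone]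
      refine Finset.sum_le_sum fun i _ => ?_
      have hdiv : f' i / ε ≤ (-u + ε * L) / ε := by
        gcongr
        exact (hfb i).2
      exact mul_le_mul_of_nonneg_right (Real.exp_le_exp.2 hdiv) (hα i).le
    have hlog : Real.log Sf ≤ (-u + ε * L) / ε := by
      have := Real.log_le_log hSfpos hSub
      rwa [Real.log_exp] at this
    have := mul_le_mul_of_nonneg_left hlog hε.le
    rw [hv]
    have heq : ε * ((-u + ε * L) / ε) = -u + ε * L := by field_simp
    linarith [heq ▸ this]
  have huL : u ≤ ε * L := by linarith
  have hvL : v ≤ ε * L := by linarith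
  constructor
  · intro i
    rw [abs_le]
    exact ⟨by linarith [(hfb i).1], by linarith [(hfb i).2]⟩
  · intro j
    rw [abs_le]
    exact ⟨by linarith [(hgb j).1], by linarith [(hgb j).2]⟩
end

section
/- Let (M, d) be a metric space, x, y ∈ M, and suppose points z_0 = x, z_1, …, z_L = y satisfy d(z_ℓ, z_{ℓ+1}) ≤ h for all ℓ. Further suppose |‖u − v‖ − d(u,v)| ≤ c·‖u−v‖³ whenever ‖u−v‖ ≤ h, where ‖·‖ ≤ d is an ambient norm. Then h·L ≥ Σ_ℓ ‖z_ℓ − z_{ℓ+1}‖ ≥ d(x,y) − c·h³·L. -/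
open Finset

lemma chain_tri {E : Type*} (d : E → E → ℝ) (hd_self : ∀ u, d u u = 0)
    (hd_tri : ∀ u v w, d u w ≤ d u v + d v w) :
    ∀ (L : ℕ) (z : Fin (L + 1) → E),
      d (z 0) (z (Fin.last L)) ≤ ∑ ℓ : Fin L, d (z ℓ.castSucc) (z ℓ.succ) := by
  intro L
  induction L with
  | zero => intro z; simp [hd_self, Fin.last]
  | succ n ih =>
    intro z
    rw [Fin.sum_univ_castSucc]
    have h1 := ih (fun i => z i.castSucc)
    have h2 := hd_tri (z 0) (z (Fin.last n).castSucc) (z (Fin.last (n+1)))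
    simp only [Fin.castSucc_zero] at h1 h2 ⊢
    calc d (z 0) (z (Fin.last (n+1)))
        ≤ d (z 0) (z (Fin.last n).castSucc) + d (z (Fin.last n).castSucc) (z (Fin.last (n+1))) := h2
      _ ≤ (∑ ℓ : Fin n, d (z ℓ.castSucc.castSucc) (z ℓ.succ.castSucc))
            + d (z (Fin.last n).castSucc) (z (Fin.last (n+1))) := by linarith
      _ = _ := by
          congr 1 <;> simp [Fin.succ_last, Fin.succ_castSucc]

/-- Lower-bound step for the unweighted shortest-path estimator of geodesic
distance: if `z_0 = x, …, z_L = y` is a path with `d(z_ℓ, z_{ℓ+1}) ≤ h`, `d`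
is a metric dominating the ambient norm, and `|‖u−v‖ − d(u,v)| ≤ c‖u−v‖³`
whenever `‖u−v‖ ≤ h`, then `hL ≥ Σ_ℓ ‖z_ℓ − z_{ℓ+1}‖ ≥ d(x,y) − c h³ L`. -/
theorem stmt17 {E : Type*} [NormedAddCommGroup E]
    (d : E → E → ℝ) (hd_self : ∀ u, d u u = 0) (hd_tri : ∀ u v w, d u w ≤ d u v + d v w)
    (hd_ge : ∀ u v, ‖u - v‖ ≤ d u v)
    (c h : ℝ) (hc : 0 ≤ c) (hh : 0 ≤ h)
    (hcmp : ∀ u v : E, ‖u - v‖ ≤ h → |‖u - v‖ - d u v| ≤ c * ‖u - v‖ ^ 3)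
    (L : ℕ) (z : Fin (L + 1) → E) (x y : E)
    (hx : z 0 = x) (hy : z (Fin.last L) = y)
    (hstep : ∀ ℓ : Fin L, d (z ℓ.castSucc) (z ℓ.succ) ≤ h) :
    (∑ ℓ : Fin L, ‖z ℓ.castSucc - z ℓ.succ‖) ≤ h * L
      ∧ d x y - c * h ^ 3 * L ≤ ∑ ℓ : Fin L, ‖z ℓ.castSucc - z ℓ.succ‖ := by
  have hnle : ∀ ℓ : Fin L, ‖z ℓ.castSucc - z ℓ.succ‖ ≤ h :=
    fun ℓ => (hd_ge _ _).trans (hstep ℓ)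
  constructor
  · calc (∑ ℓ : Fin L, ‖z ℓ.castSucc - z ℓ.succ‖) ≤ ∑ _ℓ : Fin L, h :=
        Finset.sum_le_sum fun ℓ _ => hnle ℓ
      _ = h * L := by simp [mul_comm]
  · have key : ∀ ℓ : Fin L, d (z ℓ.castSucc) (z ℓ.succ)
        ≤ ‖z ℓ.castSucc - z ℓ.succ‖ + c * h ^ 3 := by
      intro ℓ
      have h1 := hcmp _ _ (hnle ℓ)
      have h2 : d (z ℓ.castSucc) (z ℓ.succ) - ‖z ℓ.castSucc - z ℓ.succ‖
          ≤ c * ‖z ℓ.castSucc - z ℓ.succ‖ ^ 3 := by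
        have := abs_le.1 h1; linarith [this.1]
      have h3 : c * ‖z ℓ.castSucc - z ℓ.succ‖ ^ 3 ≤ c * h ^ 3 := by
        apply mul_le_mul_of_nonneg_left _ hc
        exact pow_le_pow_left₀ (norm_nonneg _) (hnle ℓ) 3
      linarith
    have hxy : d x y ≤ ∑ ℓ : Fin L, d (z ℓ.castSucc) (z ℓ.succ) := by
      rw [← hx, ← hy]; exact chain_tri d hd_self hd_tri L z
    have : (∑ ℓ : Fin L, d (z ℓ.castSucc) (z ℓ.succ))
        ≤ (∑ ℓ : Fin L, ‖z ℓ.castSucc - z ℓ.succ‖) + c * h ^ 3 * L := by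
      calc (∑ ℓ : Fin L, d (z ℓ.castSucc) (z ℓ.succ))
          ≤ ∑ ℓ : Fin L, (‖z ℓ.castSucc - z ℓ.succ‖ + c * h ^ 3) :=
            Finset.sum_le_sum fun ℓ _ => key ℓ
        _ = _ := by rw [Finset.sum_add_distrib]; simp [mul_comm, mul_assoc]
    linarith
end
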